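/- In SPC extended with the unary operator ⌊·⌋ with the rules play and pause (the latter non-smooth), weak bisimilarity fails to be a congruence for ⌊·⌋: for fixed distinct visible actions a, b ∈ Δ, a.0 + τ.b.0 ≈ a.0 + τ.b.0 + b.0, but ⌊a.0 + τ.b.0⌋ ≉ ⌊a.0 + τ.b.0 + b.0⌋. -/

import Mathlib

/-- Labels `Δτ = Δ ∪ Δ̄ ∪ {τ}`: actions, coactions and the internal action `τ`. -/
inductive Lab (Δ : Type) : Type
  | act : Δ → Lab Δ
  | coact : Δ → Lab Δ
  | tau : Lab Δ

/-- Processes of SPC extended with the unary operator `⌊·⌋`: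
`p ::= 0 | δ.p | p ∥ q | p + q | ⌊p⌋`. -/
inductive FProc (Δ : Type) : Type
  | nil : FProc Δ
  | pre : Lab Δ → FProc Δ → FProc Δ
  | par : FProc Δ → FProc Δ → FProc Δ
  | choice : FProc Δ → FProc Δ → FProc Δ
  | floor : FProc Δ → FProc Δ

/-- `p ⇒ q`: the reflexive–transitive closure of `→τ`, for an arbitrary
labelled transition relation `step`. -/
def TauStar {Δ P : Type} (step : P → Lab Δ → P → Prop) : P → P → Prop :=
  Relation.ReflTransGen (fun p q => step p Lab.tau q)

/-- The weak transition relation `p ⇒δ q`: for `δ = τ` it is `p ⇒ q`,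
otherwise `p ⇒ p' →δ q' ⇒ q`. -/
def WStep {Δ P : Type} (step : P → Lab Δ → P → Prop) (p : P) (δ : Lab Δ) (q : P) : Prop :=
  (δ = Lab.tau ∧ TauStar step p q) ∨
  (δ ≠ Lab.tau ∧ ∃ p' q', TauStar step p p' ∧ step p' δ q' ∧ TauStar step q' q)

/-- A relation `R` is a weak bisimulation if every step from one side is matched
by a weak step from the other side, ending in `R`-related states. -/
def IsWeakBisim {Δ P : Type} (step : P → Lab Δ → P → Prop) (R : P → P → Prop) : Prop :=
  ∀ p q, R p q →
    (∀ δ p', step p δ p' → ∃ q', WStep step q δ q' ∧ R p' q') ∧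
    (∀ δ q', step q δ q' → ∃ p', WStep step p δ p' ∧ R p' q')

/-- Weak bisimilarity `p ≈ q`: `p` and `q` are related by some weak bisimulation. -/
def WBisim {Δ P : Type} (step : P → Lab Δ → P → Prop) (p q : P) : Prop :=
  ∃ R, IsWeakBisim step R ∧ R p q

/-- The LTS of SPC extended with `⌊·⌋` subject to the rules
(play): `p →δ p'` implies `⌊p⌋ →δ ⌊p'⌋`, and the non-smooth rule
(pause): `p →δ p'` implies `⌊p⌋ →δ ⌊p⌋`. -/
inductive FStep {Δ : Type} : FProc Δ → Lab Δ → FProc Δ → Prop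
  | pre (δ : Lab Δ) (p : FProc Δ) : FStep (.pre δ p) δ p
  | choiceL {p p' q : FProc Δ} {δ : Lab Δ} : FStep p δ p' → FStep (.choice p q) δ p'
  | choiceR {p q q' : FProc Δ} {δ : Lab Δ} : FStep q δ q' → FStep (.choice p q) δ q'
  | parL {p p' q : FProc Δ} {δ : Lab Δ} : FStep p δ p' → FStep (.par p q) δ (.par p' q)
  | parR {p q q' : FProc Δ} {δ : Lab Δ} : FStep q δ q' → FStep (.par p q) δ (.par p q')
  | syn {p p' q q' : FProc Δ} {d : Δ} :
      FStep p (.act d) p' → FStep q (.coact d) q' → FStep (.par p q) .tau (.par p' q')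
  | play {p p' : FProc Δ} {δ : Lab Δ} : FStep p δ p' → FStep (.floor p) δ (.floor p')
  | pause {p p' : FProc Δ} {δ : Lab Δ} : FStep p δ p' → FStep (.floor p) δ (.floor p)

/-!
The summand `b.0` of `a.0 + τ.b.0 + b.0` is simulated by `a.0 + τ.b.0` through `τ` followed by
`b`, so it can be absorbed. Under `⌊·⌋` the pause rule lets `⌊a.0 + τ.b.0 + b.0⌋` perform `b` and
stay where it is, so that `a` is still available. The only way for `⌊a.0 + τ.b.0⌋` to match that
`b` is to commit to `⌊b.0⌋` by a `τ`-step first, and from there `a` can no longer be performed.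
-/

section LTS

variable {Δ P : Type} {step : P → Lab Δ → P → Prop}

theorem WStep.of_step {p q : P} {δ : Lab Δ} (h : step p δ q) : WStep step p δ q := by
  by_cases hδ : δ = .tau
  · subst hδ
    exact Or.inl ⟨rfl, .single h⟩
  · exact Or.inr ⟨hδ, p, q, .refl, h, .refl⟩

theorem TauStar.mem_of_closed {S : Set P} (hS : ∀ x ∈ S, ∀ y, step x .tau y → y ∈ S)
    {p q : P} (hp : p ∈ S) (h : TauStar step p q) : q ∈ S := by
  induction h with
  | refl => exact hp
  | tail _ hstep ih => exact hS _ ih _ hstep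

theorem not_wstep_of_closed {S : Set P} (hS : ∀ x ∈ S, ∀ δ y, step x δ y → y ∈ S)
    {δ : Lab Δ} (hδ : δ ≠ .tau) (hno : ∀ x ∈ S, ∀ y, ¬ step x δ y)
    {p q : P} (hp : p ∈ S) : ¬ WStep step p δ q := by
  rintro (⟨hτ, -⟩ | ⟨-, p', q', hpp', hstep, -⟩)
  · exact hδ hτ
  · exact hno p' (TauStar.mem_of_closed (fun x hx => hS x hx .tau) hp hpp') q' hstep

end LTS

namespace FStep

variable {Δ : Type}

theorem not_nil {δ : Lab Δ} {r : FProc Δ} : ¬ FStep .nil δ r := nofun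

theorem pre_inv {δ δ' : Lab Δ} {p r : FProc Δ} (h : FStep (.pre δ p) δ' r) :
    δ' = δ ∧ r = p := by
  cases h
  exact ⟨rfl, rfl⟩

theorem choice_inv {p q r : FProc Δ} {δ : Lab Δ} (h : FStep (.choice p q) δ r) :
    FStep p δ r ∨ FStep q δ r := by
  cases h with
  | choiceL h => exact .inl h
  | choiceR h => exact .inr h

theorem floor_inv {p r : FProc Δ} {δ : Lab Δ} (h : FStep (.floor p) δ r) :
    ∃ p', FStep p δ p' ∧ (r = .floor p' ∨ r = .floor p) := by
  cases h with
  | play h => exact ⟨_, h, .inl rfl⟩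
  | pause h => exact ⟨_, h, .inr rfl⟩

theorem floor_image_closed {S : Set (FProc Δ)} {δ : Lab Δ}
    (hS : ∀ x ∈ S, ∀ y, FStep x δ y → y ∈ S) :
    ∀ x ∈ FProc.floor '' S, ∀ y, FStep x δ y → y ∈ FProc.floor '' S := by
  rintro _ ⟨p, hp, rfl⟩ y h
  obtain ⟨p', hpp', rfl | rfl⟩ := floor_inv h
  · exact ⟨p', hS p hp p' hpp', rfl⟩
  · exact ⟨p, hp, rfl⟩

end FStep

theorem wbisim_choice_of_wstep {Δ : Type} {p q : FProc Δ}
    (hq : ∀ δ q', FStep q δ q' → WStep FStep p δ q') : WBisim FStep p (.choice p q) := by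
  refine ⟨fun x y => (x = p ∧ y = .choice p q) ∨ x = y, ?_, .inl ⟨rfl, rfl⟩⟩
  rintro x y (⟨rfl, rfl⟩ | rfl)
  · refine ⟨fun δ x' h => ⟨x', .of_step (.choiceL h), .inr rfl⟩, fun δ y' h => ?_⟩
    rcases FStep.choice_inv h with h | h
    · exact ⟨y', .of_step h, .inr rfl⟩
    · exact ⟨y', hq δ y' h, .inr rfl⟩
  · exact ⟨fun δ x' h => ⟨x', .of_step h, .inr rfl⟩, fun δ y' h => ⟨y', .of_step h, .inr rfl⟩⟩

section Counterexample

variable {Δ : Type} {a b : Δ}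

theorem wstep_choice_tau_pre {p q : FProc Δ} {d : Δ} :
    WStep FStep (.choice p (.pre .tau (.pre (.act d) q))) (.act d) q :=
  .inr ⟨nofun, _, _, .single (.choiceR (.pre _ _)), .pre _ _, .refl⟩

theorem floor_pre_act_nil_closed :
    ∀ x ∈ FProc.floor '' {.pre (.act b) .nil, .nil}, ∀ (δ : Lab Δ) y, FStep x δ y →
      y ∈ FProc.floor '' {.pre (.act b) .nil, .nil} := by
  refine fun x hx δ => FStep.floor_image_closed ?_ x hx
  rintro x (rfl | rfl) y h
  · exact .inr (FStep.pre_inv h).2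
  · exact absurd h FStep.not_nil

theorem not_wstep_act_of_mem_floor_pre_act_nil (hab : a ≠ b) {x r : FProc Δ}
    (hx : x ∈ FProc.floor '' {.pre (.act b) .nil, .nil}) : ¬ WStep FStep x (.act a) r := by
  refine not_wstep_of_closed floor_pre_act_nil_closed (by simp) ?_ hx
  rintro _ ⟨p, hp, rfl⟩ y h
  obtain ⟨p', hpp', -⟩ := FStep.floor_inv h
  rcases hp with rfl | rfl
  · exact hab (Lab.act.inj (FStep.pre_inv hpp').1)
  · exact FStep.not_nil hpp'

theorem floor_choice_tau_pre_closed :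
    ∀ x ∈ FProc.floor '' {.choice (.pre (.act a) .nil) (.pre .tau (.pre (.act b) .nil)),
      .pre (.act b) .nil}, ∀ y, FStep x .tau y →
      y ∈ FProc.floor '' {.choice (.pre (.act a) .nil) (.pre .tau (.pre (.act b) .nil)),
        .pre (.act b) .nil} := by
  refine FStep.floor_image_closed ?_
  rintro x (rfl | rfl) y h
  · rcases FStep.choice_inv h with h | h
    · cases (FStep.pre_inv h).1
    · exact .inr (FStep.pre_inv h).2
  · cases (FStep.pre_inv h).1

theorem mem_floor_pre_act_nil_of_wstep (hab : a ≠ b) {r : FProc Δ}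
    (h : WStep FStep (.floor (.choice (.pre (.act a) .nil) (.pre .tau (.pre (.act b) .nil))))
      (.act b) r) :
    r ∈ FProc.floor '' {.pre (.act b) .nil, .nil} := by
  rcases h with ⟨hτ, -⟩ | ⟨-, p', q', hpp', hstep, hqr⟩
  · cases hτ
  obtain ⟨p, hp | hp, rfl⟩ :=
    TauStar.mem_of_closed floor_choice_tau_pre_closed ⟨_, .inl rfl, rfl⟩ hpp'
  · obtain ⟨p'', hstep', -⟩ := FStep.floor_inv hstep
    subst hp
    rcases FStep.choice_inv hstep' with h | h
    · exact absurd (Lab.act.inj (FStep.pre_inv h).1).symm hab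
    · cases (FStep.pre_inv h).1
  · subst hp
    exact TauStar.mem_of_closed (fun x hx => floor_pre_act_nil_closed x hx .tau)
      (floor_pre_act_nil_closed _ ⟨_, .inl rfl, rfl⟩ _ _ hstep) hqr

end Counterexample

/-- With rules play and pause (for distinct visible actions `a`, `b`), weak
bisimilarity fails to be a congruence for `⌊·⌋`:
`a.0 + τ.b.0 ≈ a.0 + τ.b.0 + b.0` but `⌊a.0 + τ.b.0⌋ ≉ ⌊a.0 + τ.b.0 + b.0⌋`. -/
theorem floor_pause_not_congruence (Δ : Type) (a b : Δ) (hab : a ≠ b) :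
    WBisim FStep
      (FProc.choice (FProc.pre (Lab.act a) FProc.nil)
        (FProc.pre Lab.tau (FProc.pre (Lab.act b) FProc.nil)))
      (FProc.choice
        (FProc.choice (FProc.pre (Lab.act a) FProc.nil)
          (FProc.pre Lab.tau (FProc.pre (Lab.act b) FProc.nil)))
        (FProc.pre (Lab.act b) FProc.nil)) ∧
    ¬ WBisim FStep
      (FProc.floor (FProc.choice (FProc.pre (Lab.act a) FProc.nil)
        (FProc.pre Lab.tau (FProc.pre (Lab.act b) FProc.nil))))
      (FProc.floor (FProc.choice
        (FProc.choice (FProc.pre (Lab.act a) FProc.nil)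
          (FProc.pre Lab.tau (FProc.pre (Lab.act b) FProc.nil)))
        (FProc.pre (Lab.act b) FProc.nil))) := by
  refine ⟨wbisim_choice_of_wstep fun δ q' h => ?_, ?_⟩
  · obtain ⟨rfl, rfl⟩ := FStep.pre_inv h
    exact wstep_choice_tau_pre
  · rintro ⟨R, hR, hPQ⟩
    obtain ⟨r, hr, hRr⟩ := (hR _ _ hPQ).2 _ _ (.pause (.choiceR (.pre (.act b) .nil)))
    obtain ⟨x, hx, -⟩ := (hR _ _ hRr).2 _ _ (.pause (.choiceL (.choiceL (.pre (.act a) .nil))))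
    exact not_wstep_act_of_mem_floor_pre_act_nil hab (mem_floor_pre_act_nil_of_wstep hab hr) hx
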